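/- The connected-pseudoachromatic index of the complete graph K_4 is 4: there is a complete edge-coloring of K_4 with 4 colors in which every color class induces a connected subgraph, and no such coloring with 5 or more colors exists. -/
import Mathlib

open SimpleGraph

/-- A color class (set of edges) is connected: the subgraph consisting of its
edges together with their endpoints is connected. -/
def ClassConnected {V : Type*} (S : Set (Sym2 V)) : Prop :=
  ((SimpleGraph.fromEdgeSet S).induce (SimpleGraph.fromEdgeSet S).support).Connected

/-- There is a complete edge-coloring of `K_n` with `k` colors, all colors used,
in which every color class induces a connected subgraph. -/
def HasConnCompleteColoring (n k : ℕ) : Prop :=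
  ∃ c : Sym2 (Fin n) → Fin k,
    (∀ i : Fin k, ∃ e ∈ (⊤ : SimpleGraph (Fin n)).edgeSet, c e = i) ∧
    (∀ i j : Fin k, i ≠ j →
      ∃ e₁ ∈ (⊤ : SimpleGraph (Fin n)).edgeSet,
        ∃ e₂ ∈ (⊤ : SimpleGraph (Fin n)).edgeSet,
          c e₁ = i ∧ c e₂ = j ∧ ∃ v, v ∈ e₁ ∧ v ∈ e₂) ∧
    (∀ i : Fin k, ClassConnected {e ∈ (⊤ : SimpleGraph (Fin n)).edgeSet | c e = i})

/-! ### Decidability of `ClassConnected` -/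

section Dec
variable (S : Set (Sym2 (Fin 4))) [DecidablePred (· ∈ S)]

instance decFromEdgeSetAdj : DecidableRel (fromEdgeSet S).Adj := fun a b =>
  decidable_of_iff (s(a, b) ∈ S ∧ a ≠ b) (fromEdgeSet_adj S).symm

instance decSupport : DecidablePred (· ∈ (fromEdgeSet S).support) := fun v =>
  decidable_of_iff (∃ w, (fromEdgeSet S).Adj v w) (mem_support _).symm

instance decInduceAdj :
    DecidableRel ((fromEdgeSet S).induce (fromEdgeSet S).support).Adj :=
  fun a b => inferInstanceAs (Decidable ((fromEdgeSet S).Adj a.1 b.1))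

instance decCC : Decidable (ClassConnected S) :=
  decidable_of_iff
    ((((fromEdgeSet S).induce (fromEdgeSet S).support).Preconnected) ∧
      (Finset.univ : Finset ((fromEdgeSet S).support)).Nonempty)
    (by rw [Finset.univ_nonempty_iff]; exact (connected_iff _).symm)

end Dec

instance decClassSet (c : Sym2 (Fin 4) → Fin 4) (i : Fin 4) :
    DecidablePred (· ∈ {e ∈ (⊤ : SimpleGraph (Fin 4)).edgeSet | c e = i}) := fun e =>
  inferInstanceAs (Decidable (e ∈ (⊤ : SimpleGraph (Fin 4)).edgeSet ∧ c e = i))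

/-! ### The explicit coloring of `K₄` with 4 colors -/

def Kc : Matrix (Fin 4) (Fin 4) (Fin 4) := !![0,0,0,1; 0,0,2,1; 0,2,0,3; 1,1,3,0]

def cc : Sym2 (Fin 4) → Fin 4 := Sym2.lift ⟨fun a b => Kc a b, by decide⟩

theorem pos_part : HasConnCompleteColoring 4 4 := by
  refine ⟨cc, ?_, ?_, ?_⟩
  · decide
  · decide
  · decide

/-! ### Impossibility for `k ≥ 5` -/

set_option synthInstance.maxSize 2000 in
set_option synthInstance.maxHeartbeats 1000000 in
set_option maxHeartbeats 2000000 in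
/-- No four pairwise distinct, pairwise intersecting edges in `K₄`. -/
theorem four_edges : ∀ e₁ e₂ e₃ e₄ : Sym2 (Fin 4),
    e₁ ∈ (⊤ : SimpleGraph (Fin 4)).edgeSet → e₂ ∈ (⊤ : SimpleGraph (Fin 4)).edgeSet →
    e₃ ∈ (⊤ : SimpleGraph (Fin 4)).edgeSet → e₄ ∈ (⊤ : SimpleGraph (Fin 4)).edgeSet →
    e₁ ≠ e₂ → e₁ ≠ e₃ → e₁ ≠ e₄ → e₂ ≠ e₃ → e₂ ≠ e₄ → e₃ ≠ e₄ →
    (∃ v, v ∈ e₁ ∧ v ∈ e₂) → (∃ v, v ∈ e₁ ∧ v ∈ e₃) → (∃ v, v ∈ e₁ ∧ v ∈ e₄) →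
    (∃ v, v ∈ e₂ ∧ v ∈ e₃) → (∃ v, v ∈ e₂ ∧ v ∈ e₄) → (∃ v, v ∈ e₃ ∧ v ∈ e₄) →
    False := by
  decide

theorem neg_part (k : ℕ) (hk : 5 ≤ k) : ¬ HasConnCompleteColoring 4 k := by
  classical
  rintro ⟨c, h1, h2, -⟩
  set E : Finset (Sym2 (Fin 4)) :=
    Finset.univ.filter (· ∈ (⊤ : SimpleGraph (Fin 4)).edgeSet) with hEdef
  have hEcard : E.card = 6 := by decide
  have hmemE : ∀ e, e ∈ E ↔ e ∈ (⊤ : SimpleGraph (Fin 4)).edgeSet := by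
    intro e; simp [hEdef]
  -- k ≤ 6
  have hk6 : k ≤ 6 := by
    choose f hf1 hf2 using h1
    have hinj : Set.InjOn f (Finset.univ : Finset (Fin k)) := by
      intro i _ j _ h
      rw [← hf2 i, ← hf2 j, h]
    have := Finset.card_le_card_of_injOn f
      (fun i _ => (hmemE (f i)).2 (hf1 i)) hinj
    simpa [hEcard] using this
  -- classes
  set C : Fin k → Finset (Sym2 (Fin 4)) := fun i => E.filter (fun e => c e = i) with hCdef
  have hsum : ∑ i : Fin k, (C i).card = 6 := by
    rw [← hEcard]
    exact (Finset.card_eq_sum_card_fiberwise (fun e _ => Finset.mem_univ (c e))).symm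
  have hne : ∀ i, 1 ≤ (C i).card := by
    intro i
    obtain ⟨e, he, hce⟩ := h1 i
    exact Finset.card_pos.2 ⟨e, Finset.mem_filter.2 ⟨(hmemE e).2 he, hce⟩⟩
  set B : Finset (Fin k) := Finset.univ.filter (fun i => 2 ≤ (C i).card) with hBdef
  have hBbound : k + B.card ≤ 6 := by
    have key : ∀ i : Fin k, (if i ∈ B then 2 else 1) ≤ (C i).card := by
      intro i
      by_cases h : i ∈ B
      · simpa [h] using (Finset.mem_filter.1 h).2
      · simpa [h] using hne i
    calc k + B.card = ∑ i : Fin k, (if i ∈ B then 2 else 1) := by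
          have h2' : ∀ i : Fin k, (if i ∈ B then 2 else 1) = 1 + (if i ∈ B then 1 else 0) :=
            fun i => by by_cases h : i ∈ B <;> simp [h]
          simp only [h2', Finset.sum_add_distrib, Finset.sum_const, Finset.card_univ,
            Fintype.card_fin, smul_eq_mul, mul_one, Finset.sum_ite_mem, Finset.univ_inter]
      _ ≤ ∑ i : Fin k, (C i).card := Finset.sum_le_sum (fun i _ => key i)
      _ = 6 := hsum
  have hB1 : B.card ≤ 1 := by omega
  -- the singleton classes
  set A : Finset (Fin k) := Finset.univ.filter (fun i => (C i).card = 1) with hAdef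
  have hBcA : Bᶜ ⊆ A := by
    intro i hi
    simp only [Finset.mem_compl, hBdef, Finset.mem_filter, Finset.mem_univ, true_and,
      not_le] at hi
    have := hne i
    simp only [hAdef, Finset.mem_filter, Finset.mem_univ, true_and]
    omega
  have hA4 : 4 ≤ A.card := by
    have h1' : Bᶜ.card = k - B.card := by
      rw [Finset.card_compl, Fintype.card_fin]
    have := Finset.card_le_card hBcA
    omega
  obtain ⟨t, hta, ht4⟩ := Finset.exists_subset_card_eq hA4
  -- extract four distinct colors
  obtain ⟨i₁, hi₁⟩ := Finset.card_pos.1 (by omega : 0 < t.card)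
  have ht3 : (t.erase i₁).card = 3 := by rw [Finset.card_erase_of_mem hi₁, ht4]
  obtain ⟨i₂, i₃, i₄, h23, h24, h34, het⟩ := Finset.card_eq_three.1 ht3
  have hi₂ : i₂ ∈ t.erase i₁ := by rw [het]; simp
  have hi₃ : i₃ ∈ t.erase i₁ := by rw [het]; simp
  have hi₄ : i₄ ∈ t.erase i₁ := by rw [het]; simp
  have h12 : i₁ ≠ i₂ := fun h => (Finset.mem_erase.1 hi₂).1 h.symm
  have h13 : i₁ ≠ i₃ := fun h => (Finset.mem_erase.1 hi₃).1 h.symm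
  have h14 : i₁ ≠ i₄ := fun h => (Finset.mem_erase.1 hi₄).1 h.symm
  -- each of these colors has a unique edge
  have huniq : ∀ i ∈ t, ∃ e, e ∈ (⊤ : SimpleGraph (Fin 4)).edgeSet ∧ c e = i ∧
      ∀ e', e' ∈ (⊤ : SimpleGraph (Fin 4)).edgeSet → c e' = i → e' = e := by
    intro i hi
    have : (C i).card = 1 := (Finset.mem_filter.1 (hta hi)).2
    obtain ⟨e, he⟩ := Finset.card_eq_one.1 this
    have heC : e ∈ C i := by rw [he]; simp
    obtain ⟨heE, hce⟩ := Finset.mem_filter.1 heC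
    refine ⟨e, (hmemE e).1 heE, hce, fun e' he' hce' => ?_⟩
    have : e' ∈ C i := Finset.mem_filter.2 ⟨(hmemE e').2 he', hce'⟩
    rw [he] at this
    exact Finset.mem_singleton.1 this
  obtain ⟨e₁, he₁, hc₁, hu₁⟩ := huniq i₁ hi₁
  obtain ⟨e₂, he₂, hc₂, hu₂⟩ := huniq i₂ (Finset.mem_of_mem_erase hi₂)
  obtain ⟨e₃, he₃, hc₃, hu₃⟩ := huniq i₃ (Finset.mem_of_mem_erase hi₃)
  obtain ⟨e₄, he₄, hc₄, hu₄⟩ := huniq i₄ (Finset.mem_of_mem_erase hi₄)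
  -- pairwise shared vertices
  have adj : ∀ (i j : Fin k) (a b : Sym2 (Fin 4)), i ≠ j →
      a ∈ (⊤ : SimpleGraph (Fin 4)).edgeSet → c a = i →
      (∀ e', e' ∈ (⊤ : SimpleGraph (Fin 4)).edgeSet → c e' = i → e' = a) →
      b ∈ (⊤ : SimpleGraph (Fin 4)).edgeSet → c b = j →
      (∀ e', e' ∈ (⊤ : SimpleGraph (Fin 4)).edgeSet → c e' = j → e' = b) →
      ∃ v, v ∈ a ∧ v ∈ b := by
    intro i j a b hij ha hca hua hb hcb hub
    obtain ⟨f₁, hf₁, f₂, hf₂, hcf₁, hcf₂, v, hv₁, hv₂⟩ := h2 i j hij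
    rw [hua f₁ hf₁ hcf₁] at hv₁
    rw [hub f₂ hf₂ hcf₂] at hv₂
    exact ⟨v, hv₁, hv₂⟩
  have hne' : ∀ {a b : Sym2 (Fin 4)} {i j : Fin k}, i ≠ j → c a = i → c b = j → a ≠ b := by
    intro a b i j hij ha hb h
    exact hij (ha ▸ hb ▸ h ▸ rfl)
  exact four_edges e₁ e₂ e₃ e₄ he₁ he₂ he₃ he₄
    (hne' h12 hc₁ hc₂) (hne' h13 hc₁ hc₃) (hne' h14 hc₁ hc₄)
    (hne' h23 hc₂ hc₃) (hne' h24 hc₂ hc₄) (hne' h34 hc₃ hc₄)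
    (adj i₁ i₂ e₁ e₂ h12 he₁ hc₁ hu₁ he₂ hc₂ hu₂)
    (adj i₁ i₃ e₁ e₃ h13 he₁ hc₁ hu₁ he₃ hc₃ hu₃)
    (adj i₁ i₄ e₁ e₄ h14 he₁ hc₁ hu₁ he₄ hc₄ hu₄)
    (adj i₂ i₃ e₂ e₃ h23 he₂ hc₂ hu₂ he₃ hc₃ hu₃)
    (adj i₂ i₄ e₂ e₄ h24 he₂ hc₂ hu₂ he₄ hc₄ hu₄)
    (adj i₃ i₄ e₃ e₄ h34 he₃ hc₃ hu₃ he₄ hc₄ hu₄)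

theorem stmt_7 :
    HasConnCompleteColoring 4 4 ∧ ∀ k : ℕ, 5 ≤ k → ¬ HasConnCompleteColoring 4 k := by
  exact ⟨pos_part, neg_part⟩
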